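/- arXiv:1505.05599 — 5 statements merged into one kernel-verified Lean document; each statement's English description precedes it below -/
import Mathlib

section
/- For every prime q, let G be the complete layered graph on n = q^2 vertices consisting of q layers of q vertices each, where a vertex in layer L is adjacent exactly to all vertices of layers L−1 and L+1. Then for every pair set P whose pairs each consist of a vertex of layer 1 and a vertex of layer q, there exists a consistent path tiebreaking scheme ρ_G on G such that the paths {ρ_G(p) : p ∈ P} are pairwise edge-disjoint; consequently the union ∪_{p∈P} ρ_G(p) contains exactly |P|·(q−1) = n^{1/2}·|P| − |P| edges. In particular, for any 1/2 ≤ c ≤ 1, taking |P| = ⌊n^c⌋ such pairs yields a consistent scheme whose union of paths has Θ(n^{1/2}|P|) edges. -/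
/-!
Vertices `(ℓ, a)` of `layeredGraph q q` are points of the affine plane over `𝔽_q`. A pair in
distinct layers is joined along the line through it, which meets every layer once; a pair in a
common layer by a two-step detour through a fixed neighbour of that layer. Every subpath of a
scheme path is a shortest walk inside the vertex set of that path; such a walk is unique and is
itself a scheme path, because two points of a line in distinct layers span the same line. Two
lines sharing an edge share two points in distinct layers, so they coincide: the paths from the
first to the last layer are pairwise edge-disjoint, each with `q - 1` edges.
-/

/-- The complete layered graph with `t` layers of `q` vertices each: a vertex in layer `L`
is adjacent exactly to all vertices of layers `L - 1` and `L + 1`. -/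
def layeredGraph (t q : ℕ) : SimpleGraph (Fin t × Fin q) where
  Adj u v := u.1.val + 1 = v.1.val ∨ v.1.val + 1 = u.1.val
  symm := ⟨by intro u v h; tauto⟩
  loopless := ⟨by intro u h; rcases h with h | h <;> omega⟩

/-- Every `ρ u v` is a shortest path from `u` to `v`. -/
def IsShortestPathScheme {V : Type*} {G : SimpleGraph V}
    (ρ : ∀ u v : V, G.Walk u v) : Prop :=
  ∀ u v : V, (ρ u v).IsPath ∧ (ρ u v).length = G.dist u v

/-- A path tiebreaking scheme is consistent if whenever `w` and `x` both lie on `ρ u v`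
(with `x` not before `w`), the path `ρ w x` equals the subpath of `ρ u v` between `w`
and `x`. -/
def IsConsistentScheme {V : Type*} [DecidableEq V] {G : SimpleGraph V}
    (ρ : ∀ u v : V, G.Walk u v) : Prop :=
  ∀ (u v w : V) (hw : w ∈ (ρ u v).support) (x : V)
    (hx : x ∈ ((ρ u v).dropUntil w hw).support),
    ρ w x = ((ρ u v).dropUntil w hw).takeUntil x hx

open SimpleGraph Walk

theorem IsConsistentScheme.of_forall_shortest_eq {V : Type*} [DecidableEq V] {G : SimpleGraph V}
    {ρ : ∀ u v : V, G.Walk u v} (hρ : IsShortestPathScheme ρ)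
    (h : ∀ u v w x (p : G.Walk w x), p.length = G.dist w x →
      p.support ⊆ (ρ u v).support → p = ρ w x) :
    IsConsistentScheme ρ := by
  intro u v w hw x hx
  have hsub := (isSubwalk_takeUntil _ hx).trans (isSubwalk_dropUntil _ hw)
  exact (h u v w x _ (length_eq_dist_of_subwalk (hρ u v).2 hsub) hsub.support_subset).symm

theorem SimpleGraph.Walk.ext_getVert_of_internal {V : Type*} {G : SimpleGraph V} {u v : V}
    {p p' : G.Walk u v} (hl : p.length = p'.length)
    (h : ∀ k, 0 < k → k < p.length → p.getVert k = p'.getVert k) : p = p' := by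
  refine ext_getVert_le_length hl fun k hk => ?_
  rcases Nat.eq_zero_or_pos k with rfl | hk0
  · simp
  rcases hk.lt_or_eq with hk | rfl
  · exact h k hk0 hk
  · rw [getVert_length, hl, getVert_length]

section Line

variable {K : Type*} [Field K]

/-- The affine function whose graph is the line through `a` and `b`; the constant `a.2` when
`a.1 = b.1`. -/
def lineThrough (a b : K × K) (x : K) : K :=
  a.2 + (x - a.1) * ((b.2 - a.2) / (b.1 - a.1))

@[simp]
theorem lineThrough_fst (a b : K × K) : lineThrough a b a.1 = a.2 := by
  simp [lineThrough]

theorem lineThrough_snd {a b : K × K} (h : a.1 ≠ b.1) : lineThrough a b b.1 = b.2 := by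
  have : b.1 - a.1 ≠ 0 := sub_ne_zero.2 h.symm
  rw [lineThrough, mul_div_cancel₀ _ this]
  ring

theorem lineThrough_eq_of_mem {a b c d : K × K} (hc : lineThrough a b c.1 = c.2)
    (hd : lineThrough a b d.1 = d.2) (hcd : c.1 ≠ d.1) : lineThrough c d = lineThrough a b := by
  have hrise : d.2 - c.2 = (d.1 - c.1) * ((b.2 - a.2) / (b.1 - a.1)) := by
    rw [← hc, ← hd, lineThrough, lineThrough]
    ring
  funext x
  rw [lineThrough, hrise, mul_div_cancel_left₀ _ (sub_ne_zero.2 hcd.symm), ← hc, lineThrough,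
    lineThrough]
  ring

end Line

namespace layeredGraph

variable {t q : ℕ}

@[simp]
theorem adj_iff {u v : Fin t × Fin q} :
    (layeredGraph t q).Adj u v ↔ (u.1 : ℕ) + 1 = v.1 ∨ (v.1 : ℕ) + 1 = u.1 := Iff.rfl

theorem fst_ne_of_adj {u v : Fin t × Fin q} (h : (layeredGraph t q).Adj u v) : u.1 ≠ v.1 := by
  rintro huv
  rw [adj_iff, huv] at h
  omega

theorem dist_fst_le_length {u v : Fin t × Fin q} (p : (layeredGraph t q).Walk u v) :
    Nat.dist u.1 v.1 ≤ p.length := by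
  induction p with
  | nil => simp
  | cons h p ih =>
    rw [adj_iff] at h
    simp only [Nat.dist, length_cons] at ih ⊢
    omega

theorem length_eq_dist_of_length_le {u v : Fin t × Fin q} (p : (layeredGraph t q).Walk u v)
    (hp : p.length ≤ Nat.dist u.1 v.1) : p.length = (layeredGraph t q).dist u v := by
  obtain ⟨s, hs⟩ := p.reachable.exists_walk_length_eq_dist
  have := dist_fst_le_length s
  have := dist_le p
  omega

theorem fst_getVert_eq {u v : Fin t × Fin q} {p p' : (layeredGraph t q).Walk u v}
    (hp : p.length = Nat.dist u.1 v.1) (hp' : p'.length = Nat.dist u.1 v.1) (k : ℕ) :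
    (p.getVert k).1 = (p'.getVert k).1 := by
  have h₁ := dist_fst_le_length (p.take k)
  have h₂ := dist_fst_le_length (p.drop k)
  have h₃ := dist_fst_le_length (p'.take k)
  have h₄ := dist_fst_le_length (p'.drop k)
  simp only [take_length, drop_length, Nat.dist] at *
  ext
  omega

theorem eq_of_support_subset_graph (f : Fin t → Fin q) {u v : Fin t × Fin q}
    {p p' : (layeredGraph t q).Walk u v}
    (hp : p.length = Nat.dist u.1 v.1) (hp' : p'.length = Nat.dist u.1 v.1)
    (hf : ∀ y ∈ p.support, y.2 = f y.1) (hf' : ∀ y ∈ p'.support, y.2 = f y.1) : p = p' := by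
  refine ext_getVert_le_length (hp.trans hp'.symm) fun k _ => ?_
  have hfst := fst_getVert_eq hp hp' k
  refine Prod.ext hfst ?_
  rw [hf _ (getVert_mem_support p k), hf' _ (getVert_mem_support p' k), hfst]

theorem exists_walk_support_subset_graph (f : Fin t → Fin q) {u v : Fin t × Fin q}
    (hu : u.2 = f u.1) (hv : v.2 = f v.1) :
    ∃ p : (layeredGraph t q).Walk u v,
      p.length = Nat.dist u.1 v.1 ∧ ∀ y ∈ p.support, y.2 = f y.1 := by
  wlog huv : u.1 ≤ v.1 generalizing u v
  · obtain ⟨p, hp, hs⟩ := this hv hu (by omega)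
    exact ⟨p.reverse, by rw [length_reverse, hp, Nat.dist_comm], by simpa using hs⟩
  obtain ⟨n, hn⟩ := Nat.exists_eq_add_of_le huv
  clear huv
  induction n generalizing v with
  | zero =>
    have hfst : u.1 = v.1 := Fin.ext (by omega)
    obtain rfl : u = v := Prod.ext hfst (by rw [hu, hv, hfst])
    exact ⟨nil, by simp, by simpa using hu⟩
  | succ n ih =>
    let w : Fin t × Fin q := (⟨u.1 + n, by omega⟩, f ⟨u.1 + n, by omega⟩)
    obtain ⟨p, hp, hs⟩ := ih (v := w) rfl rfl
    have hwv : (layeredGraph t q).Adj w v := by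
      simp only [adj_iff, w]
      omega
    refine ⟨p.concat hwv, ?_, ?_⟩
    · simp only [length_concat, hp, Nat.dist, w] at *
      omega
    · intro y hy
      rw [support_concat, List.mem_append, List.mem_singleton] at hy
      rcases hy with hy | rfl
      exacts [hs y hy, hv]

section Prime

variable {q : ℕ} [Fact q.Prime]

def toPlane (y : Fin q × Fin q) : ZMod q × ZMod q :=
  (ZMod.finEquiv q y.1, ZMod.finEquiv q y.2)

/-- The line through `u` and `v`, read as a position in each layer. -/
def lineSection (u v : Fin q × Fin q) (ℓ : Fin q) : Fin q :=
  (ZMod.finEquiv q).symm (lineThrough (toPlane u) (toPlane v) (ZMod.finEquiv q ℓ))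

theorem snd_eq_lineSection_iff {u v y : Fin q × Fin q} :
    y.2 = lineSection u v y.1 ↔
      lineThrough (toPlane u) (toPlane v) (toPlane y).1 = (toPlane y).2 := by
  rw [lineSection, RingEquiv.eq_symm_apply, eq_comm]
  rfl

theorem snd_eq_lineSection_left (u v : Fin q × Fin q) : u.2 = lineSection u v u.1 :=
  snd_eq_lineSection_iff.2 (lineThrough_fst _ _)

theorem snd_eq_lineSection_right {u v : Fin q × Fin q} (h : u.1 ≠ v.1) :
    v.2 = lineSection u v v.1 :=
  snd_eq_lineSection_iff.2 (lineThrough_snd ((ZMod.finEquiv q).injective.ne h))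

theorem lineSection_eq_of_mem {u v w x : Fin q × Fin q} (hw : w.2 = lineSection u v w.1)
    (hx : x.2 = lineSection u v x.1) (h : w.1 ≠ x.1) : lineSection w x = lineSection u v := by
  funext ℓ
  rw [lineSection, lineSection, lineThrough_eq_of_mem (snd_eq_lineSection_iff.1 hw)
    (snd_eq_lineSection_iff.1 hx) ((ZMod.finEquiv q).injective.ne h)]

def detour (L : Fin q) : Fin q × Fin q :=
  (⟨if (L : ℕ) = 0 then 1 else L - 1, by
    have := (Fact.out : q.Prime).one_lt
    split_ifs <;> omega⟩, 0)

theorem adj_detour {u : Fin q × Fin q} {L : Fin q} (h : u.1 = L) :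
    (layeredGraph q q).Adj u (detour L) := by
  subst h
  simp only [adj_iff, detour]
  split_ifs <;> omega

def detourWalk {u v : Fin q × Fin q} (h : u.1 = v.1) : (layeredGraph q q).Walk u v :=
  .cons (adj_detour rfl) (.cons (adj_detour h.symm).symm .nil)

noncomputable def lineScheme (u v : Fin q × Fin q) : (layeredGraph q q).Walk u v :=
  if huv : u = v then huv ▸ .nil
  else if h : u.1 = v.1 then detourWalk h
  else (exists_walk_support_subset_graph (lineSection u v) (snd_eq_lineSection_left u v)
    (snd_eq_lineSection_right h)).choose

@[simp]
theorem lineScheme_self (u : Fin q × Fin q) : lineScheme u u = .nil := by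
  simp [lineScheme]

theorem lineScheme_of_fst_eq {u v : Fin q × Fin q} (h : u.1 = v.1) (huv : u ≠ v) :
    lineScheme u v = detourWalk h := by
  simp [lineScheme, huv, h]

theorem lineScheme_of_fst_ne {u v : Fin q × Fin q} (h : u.1 ≠ v.1) :
    (lineScheme u v).length = Nat.dist u.1 v.1 ∧
      ∀ y ∈ (lineScheme u v).support, y.2 = lineSection u v y.1 := by
  have huv : u ≠ v := fun huv => h (congrArg Prod.fst huv)
  simp only [lineScheme, huv, h, dite_false]
  exact (exists_walk_support_subset_graph _ (snd_eq_lineSection_left u v)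
    (snd_eq_lineSection_right h)).choose_spec

theorem length_lineScheme (u v : Fin q × Fin q) :
    (lineScheme u v).length = (layeredGraph q q).dist u v := by
  by_cases huv : u = v
  · subst huv
    simp
  by_cases h : u.1 = v.1
  · have hnadj : ¬(layeredGraph q q).Adj u v := by simp [h]
    have := (lineScheme u v).reachable.one_lt_dist_of_ne_of_not_adj huv hnadj
    have := dist_le (lineScheme u v)
    rw [lineScheme_of_fst_eq h huv, detourWalk] at *
    simp only [length_cons, length_nil] at *
    omega
  · exact length_eq_dist_of_length_le _ (lineScheme_of_fst_ne h).1.le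

theorem isShortestPathScheme_lineScheme : IsShortestPathScheme (lineScheme (q := q)) :=
  fun u v => ⟨isPath_of_length_eq_dist _ (length_lineScheme u v), length_lineScheme u v⟩

theorem eq_lineScheme_of_support_subset_line {a b w x : Fin q × Fin q}
    (p : (layeredGraph q q).Walk w x) (hp : p.length = (layeredGraph q q).dist w x)
    (hs : ∀ y ∈ p.support, y.2 = lineSection a b y.1) : p = lineScheme w x := by
  have hw := hs w p.start_mem_support
  have hx := hs x p.end_mem_support
  by_cases hwx : w.1 = x.1
  · obtain rfl : w = x := Prod.ext hwx (by rw [hw, hx, hwx])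
    rw [SimpleGraph.dist_self, length_eq_zero_iff] at hp
    rw [lineScheme_self, hp.eq_nil]
  obtain ⟨hlen, hline⟩ := lineScheme_of_fst_ne hwx
  rw [lineSection_eq_of_mem hw hx hwx] at hline
  exact eq_of_support_subset_graph _ (hp.trans ((length_lineScheme w x).symm.trans hlen))
    hlen hs hline

theorem eq_lineScheme_of_support_subset_detour {u v : Fin q × Fin q} (h : u.1 = v.1)
    {w x : Fin q × Fin q} (p : (layeredGraph q q).Walk w x)
    (hp : p.length = (layeredGraph q q).dist w x)
    (hs : p.support ⊆ (detourWalk h).support) : p = lineScheme w x := by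
  have hS : ∀ z ∈ p.support, z = detour u.1 ∨ z.1 = u.1 := fun z hz => by
    have := hs hz
    simp only [detourWalk, support_cons, support_nil, List.mem_cons, List.not_mem_nil] at this
    rcases this with rfl | rfl | rfl | ⟨⟩ <;> tauto
  have hlen : p.length ≤ 2 := by
    have := ((isPath_of_length_eq_dist p hp).support_nodup.subperm hs).length_le
    simp only [detourWalk, support_cons, support_nil, List.length_cons, List.length_nil,
      length_support] at this
    omega
  refine ext_getVert_of_internal (hp.trans (length_lineScheme w x).symm) fun k hk0 hk => ?_
  obtain rfl : k = 1 := by omega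
  have hwx : w ≠ x := by
    rintro rfl
    rw [dist_self] at hp
    omega
  have hw := hS w p.start_mem_support
  have hx := hS x p.end_mem_support
  have hy := hS _ (p.getVert_mem_support 1)
  have hwy := fst_ne_of_adj (p.adj_getVert_succ (i := 0) (by omega))
  have hyx := fst_ne_of_adj (p.adj_getVert_succ (i := 1) (by omega))
  rw [getVert_zero, zero_add] at hwy
  rw [p.getVert_of_length_le (i := 1 + 1) (by omega)] at hyx
  generalize p.getVert 1 = y at *
  -- `y` leaves the layer of its neighbours `w` and `x`, and `detour u.1` is the only such vertex
  have hy' : y = detour u.1 := by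
    refine hy.resolve_right fun hy => hwx ?_
    rw [hw.resolve_right fun hw => hwy (hw.trans hy.symm),
      hx.resolve_right fun hx => hyx (hy.trans hx.symm)]
  have hw' := hw.resolve_left fun hw => hwy (congrArg Prod.fst (hw.trans hy'.symm))
  have hx' := hx.resolve_left fun hx => hyx (congrArg Prod.fst (hy'.trans hx.symm))
  rw [lineScheme_of_fst_eq (hw'.trans hx'.symm) hwx, hy']
  exact congrArg detour hw'.symm

theorem isConsistentScheme_lineScheme : IsConsistentScheme (lineScheme (q := q)) := by
  refine IsConsistentScheme.of_forall_shortest_eq isShortestPathScheme_lineScheme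
    fun u v w x p hp hs => ?_
  by_cases huv : u = v
  · subst huv
    refine eq_lineScheme_of_support_subset_line (a := u) (b := u) p hp fun y hy => ?_
    obtain rfl : y = u := by simpa using hs hy
    exact snd_eq_lineSection_left y y
  by_cases h : u.1 = v.1
  · rw [lineScheme_of_fst_eq h huv] at hs
    exact eq_lineScheme_of_support_subset_detour h p hp hs
  · exact eq_lineScheme_of_support_subset_line p hp fun y hy =>
      (lineScheme_of_fst_ne h).2 y (hs hy)

theorem eq_of_mem_edges_lineScheme {a b a' b' : Fin q × Fin q} (hab : a.1 ≠ b.1)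
    (ha : a.1 = a'.1) (hb : b.1 = b'.1) {e : Sym2 (Fin q × Fin q)}
    (he : e ∈ (lineScheme a b).edges) (he' : e ∈ (lineScheme a' b').edges) :
    a = a' ∧ b = b' := by
  induction e using Sym2.ind with
  | _ y z =>
  have hab' : a'.1 ≠ b'.1 := ha ▸ hb ▸ hab
  have hyz := fst_ne_of_adj ((lineScheme a b).adj_of_mem_edges he)
  have hline := (lineScheme_of_fst_ne hab).2
  have hline' := (lineScheme_of_fst_ne hab').2
  have hf : lineSection a b = lineSection a' b' := by
    rw [← lineSection_eq_of_mem (hline y (fst_mem_support_of_mem_edges _ he))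
        (hline z (snd_mem_support_of_mem_edges _ he)) hyz,
      lineSection_eq_of_mem (hline' y (fst_mem_support_of_mem_edges _ he'))
        (hline' z (snd_mem_support_of_mem_edges _ he')) hyz]
  refine ⟨Prod.ext ha ?_, Prod.ext hb ?_⟩
  · rw [snd_eq_lineSection_left a b, snd_eq_lineSection_left a' b', hf, ha]
  · rw [snd_eq_lineSection_right hab, snd_eq_lineSection_right hab', hf, hb]

theorem card_edges_lineScheme {u v : Fin q × Fin q} (h : u.1 ≠ v.1) :
    (lineScheme u v).edges.toFinset.card = Nat.dist u.1 v.1 := by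
  rw [List.toFinset_card_of_nodup (isShortestPathScheme_lineScheme u v).1.isTrail.edges_nodup,
    length_edges, (lineScheme_of_fst_ne h).1]

end Prime

end layeredGraph

/-- **Tightness of the `n^(1/2)|P|` bound for consistent tiebreaking schemes.**
For every prime `q`, in the complete layered graph on `n = q²` vertices having `q` layers
of `q` vertices each, for every pair set `P` whose pairs each consist of a vertex of the
first layer and a vertex of the last layer, there is a consistent shortest-path tiebreaking
scheme `ρ` whose paths on `P` are pairwise edge-disjoint; consequently the union
`⋃_{p ∈ P} ρ p` contains exactly `|P| · (q - 1) = n^(1/2)·|P| - |P|` edges. -/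
theorem consistent_lower_bound_sqrt (q : ℕ) (hq : q.Prime)
    (P : Finset ((Fin q × Fin q) × (Fin q × Fin q)))
    (hP : ∀ p ∈ P, p.1.1.val = 0 ∧ p.2.1.val = q - 1) :
    ∃ ρ : ∀ u v : Fin q × Fin q, (layeredGraph q q).Walk u v,
      IsShortestPathScheme ρ ∧
      IsConsistentScheme ρ ∧
      (∀ p ∈ P, ∀ p' ∈ P, p ≠ p' →
        List.Disjoint (ρ p.1 p.2).edges (ρ p'.1 p'.2).edges) ∧
      (P.biUnion (fun p => (ρ p.1 p.2).edges.toFinset)).card = P.card * (q - 1) := by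
  have : Fact q.Prime := ⟨hq⟩
  have hlayers : ∀ p ∈ P, p.1.1 ≠ p.2.1 := fun p hp h => by
    have := hq.two_le
    have := congrArg Fin.val h
    have := hP p hp
    omega
  have hdisj : ∀ p ∈ P, ∀ p' ∈ P, p ≠ p' →
      List.Disjoint (layeredGraph.lineScheme p.1 p.2).edges
        (layeredGraph.lineScheme p'.1 p'.2).edges :=
    fun p hp p' hp' hne e he he' => hne <| Prod.ext_iff.2 <|
      layeredGraph.eq_of_mem_edges_lineScheme (hlayers p hp)
        (Fin.ext <| by rw [(hP p hp).1, (hP p' hp').1])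
        (Fin.ext <| by rw [(hP p hp).2, (hP p' hp').2]) he he'
  refine ⟨layeredGraph.lineScheme, layeredGraph.isShortestPathScheme_lineScheme,
    layeredGraph.isConsistentScheme_lineScheme, hdisj, ?_⟩
  rw [Finset.card_biUnion fun p hp p' hp' hne => Finset.disjoint_left.2 fun e he he' =>
    hdisj p hp p' hp' hne (List.mem_toFinset.1 he) (List.mem_toFinset.1 he')]
  refine Finset.sum_const_nat fun p hp => ?_
  rw [layeredGraph.card_edges_lineScheme (hlayers p hp), Nat.dist, (hP p hp).1, (hP p hp).2]
  omega
end

section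
/- There is an absolute constant C such that the following holds. Let H be an undirected graph on n vertices that admits an orientation of its edges in which Σ_{v} (indeg(v) choose 2) = b. Then H has at most C·(n + √(n·b)) edges. -/
/-!
Orient `H` by `D` and let `d v` be the in-degree of `v`. Every edge has exactly one head, so
`|E(H)| = S := ∑ d v`, while `∑ d v ^ 2 = 2b + S` since `d² = 2·C(d, 2) + d`.
Cauchy–Schwarz gives `S² ≤ n (2b + S)`, and solving this quadratic inequality yields
`S ≤ 2 (n + √(n b))`.
-/

open Finset

section Orientation

variable {V : Type*} {H : SimpleGraph V} {D : V → V → Prop}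

/-- Arcs are listed head first: `(v, u)` stands for `u → v`. -/
noncomputable def orientedEdgesEquiv (hAdj : ∀ u v, H.Adj u v ↔ D u v ∨ D v u)
    (hAsym : ∀ u v, D u v → ¬ D v u) :
    {p : V × V // D p.2 p.1} ≃ H.edgeSet :=
  Equiv.ofBijective (fun p => ⟨s(p.1.2, p.1.1), (hAdj _ _).2 (Or.inl p.2)⟩) <| by
    constructor
    · rintro ⟨⟨v, u⟩, huv⟩ ⟨⟨v', u'⟩, hu'v'⟩ h
      rcases Sym2.eq_iff.1 (congrArg Subtype.val h) with ⟨rfl, rfl⟩ | ⟨rfl, rfl⟩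
      · rfl
      · exact absurd hu'v' (hAsym _ _ huv)
    · rintro ⟨e, he⟩
      induction e using Sym2.ind with
      | _ u v =>
        rcases (hAdj u v).1 he with h | h
        · exact ⟨⟨(v, u), h⟩, rfl⟩
        · exact ⟨⟨(u, v), h⟩, Subtype.ext Sym2.eq_swap⟩

theorem ncard_edgeSet_eq_sum_ncard_inNeighbors [Fintype V]
    (hAdj : ∀ u v, H.Adj u v ↔ D u v ∨ D v u) (hAsym : ∀ u v, D u v → ¬ D v u) :
    H.edgeSet.ncard = ∑ v, {u | D u v}.ncard := by
  rw [← Nat.card_coe_set_eq, ← Nat.card_congr (orientedEdgesEquiv hAdj hAsym),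
    Nat.card_congr (Equiv.subtypeProdEquivSigmaSubtype fun v u => D u v), Nat.card_sigma]
  exact sum_congr rfl fun v _ => Nat.card_coe_set_eq {u | D u v}

end Orientation

theorem sum_sq_eq_two_mul_sum_choose_two_add_sum {ι : Type*} (s : Finset ι) (d : ι → ℕ) :
    ∑ i ∈ s, (d i : ℝ) ^ 2 =
      2 * ∑ i ∈ s, ((d i).choose 2 : ℝ) + ∑ i ∈ s, (d i : ℝ) := by
  simp only [mul_sum, ← sum_add_distrib, Nat.cast_choose_two]
  exact sum_congr rfl fun i _ => by ring

theorem le_two_mul_add_sqrt_of_sq_le_mul {S n b : ℝ} (hn : 0 ≤ n) (hb : 0 ≤ b)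
    (h : S ^ 2 ≤ n * (2 * b + S)) : S ≤ 2 * (n + √(n * b)) := by
  set x := √(n * b)
  have hx0 : 0 ≤ x := Real.sqrt_nonneg _
  have hx2 : x ^ 2 = n * b := Real.sq_sqrt (mul_nonneg hn hb)
  nlinarith [sq_nonneg (S - 2 * n - 2 * x), mul_nonneg hn hx0]

/-- **Branching events bound the number of edges.** There is an absolute constant `C` such
that if an undirected graph `H` on `n` vertices admits an orientation of its edges in which
`∑_v (indeg(v) choose 2) = b`, then `H` has at most `C · (n + √(n·b))` edges. -/
theorem edges_le_of_branching_events :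
    ∃ C : ℝ, 0 < C ∧
      ∀ (V : Type) [Fintype V] (H : SimpleGraph V) (D : V → V → Prop) (b : ℕ),
        (∀ u v : V, H.Adj u v ↔ (D u v ∨ D v u)) →
        (∀ u v : V, D u v → ¬ D v u) →
        (∑ v : V, ({u : V | D u v}.ncard).choose 2) = b →
        (H.edgeSet.ncard : ℝ) ≤
          C * ((Fintype.card V : ℝ) + Real.sqrt ((Fintype.card V : ℝ) * (b : ℝ))) := by
  refine ⟨2, two_pos, fun V _ H D b hAdj hAsym hb => ?_⟩
  set d : V → ℕ := fun v => {u | D u v}.ncard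
  have hsq : ∑ v, (d v : ℝ) ^ 2 = 2 * b + ∑ v, (d v : ℝ) := by
    rw [sum_sq_eq_two_mul_sum_choose_two_add_sum, ← hb]
    push_cast
    rfl
  have hCS : (∑ v, (d v : ℝ)) ^ 2 ≤ Fintype.card V * (2 * b + ∑ v, (d v : ℝ)) := by
    simpa only [← hsq, card_univ] using
      sq_sum_le_card_mul_sum_sq (s := univ) (f := fun v => (d v : ℝ))
  rw [ncard_edgeSet_eq_sum_ncard_inNeighbors hAdj hAsym, Nat.cast_sum]
  exact le_two_mul_add_sqrt_of_sq_le_mul (Nat.cast_nonneg _) (Nat.cast_nonneg _) hCS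
end

section
/- Let G = (V,E) be a connected undirected unweighted graph on n ≥ 4 vertices and let r ≥ 1 be an integer. Then there exist vertices v_1, …, v_k (cluster centers) and integers r_1, …, r_k such that: (1) r ≤ r_i ≤ 2r·4^{⌈(log₂ n)/(log₂ log₂ n)⌉} for every i; (2) every vertex v ∈ V lies in B_≤(v_i, r_i) for some i; and (3) Σ_{i=1}^{k} |B_≤(v_i, 2r_i)| ≤ n·log₂ n. -/
/-- **Graph clustering.** Let `G` be a connected undirected unweighted graph on `n ≥ 4`
vertices and `r ≥ 1` an integer. Then there are cluster centers `v_1, …, v_k` and integers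
`r_1, …, r_k` with `r ≤ r_i ≤ 2r · 4^⌈(log₂ n)/(log₂ log₂ n)⌉`, such that every vertex lies
in some core `B_≤(v_i, r_i)`, and `∑_i |B_≤(v_i, 2 r_i)| ≤ n · log₂ n`. -/
theorem graph_clustering (V : Type) [Fintype V] (G : SimpleGraph V)
    (hconn : G.Connected) (hn : 4 ≤ Fintype.card V) (r : ℕ) (hr : 1 ≤ r) :
    ∃ (k : ℕ) (v : Fin k → V) (rad : Fin k → ℕ),
      (∀ i : Fin k, r ≤ rad i ∧ rad i ≤ 2 * r *
        4 ^ ⌈Real.logb 2 (Fintype.card V) /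
              Real.logb 2 (Real.logb 2 (Fintype.card V))⌉₊) ∧
      (∀ w : V, ∃ i : Fin k, G.dist (v i) w ≤ rad i) ∧
      ((∑ i : Fin k, ({w : V | G.dist (v i) w ≤ 2 * rad i}).ncard : ℕ) : ℝ) ≤
        (Fintype.card V : ℝ) * Real.logb 2 (Fintype.card V) := by
  classical
  set n := Fintype.card V with hndef
  set L : ℝ := Real.logb 2 n with hLdef
  set E : ℕ := ⌈Real.logb 2 (n : ℝ) / Real.logb 2 (Real.logb 2 (n : ℝ))⌉₊ with hEdef
  -- basic facts
  have hn2 : (2 : ℝ) ≤ L := by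
    have h1 : Real.logb 2 4 ≤ L :=
      Real.logb_le_logb_of_le (by norm_num) (by norm_num) (by exact_mod_cast hn)
    have h4 : Real.logb 2 4 = 2 := by
      rw [show (4 : ℝ) = 2 ^ (2 : ℕ) by norm_num, Real.logb_pow,
        Real.logb_self_eq_one (by norm_num)]
      norm_num
    linarith
  have hL1 : (1 : ℝ) < L := by linarith
  have hlogL : 0 < Real.log L := Real.log_pos hL1
  have hE1 : 1 ≤ E := by
    rw [hEdef]
    rw [Nat.one_le_ceil_iff]
    apply div_pos
    · have : (1:ℝ) < (n:ℝ) := by exact_mod_cast lt_of_lt_of_le (by norm_num) hn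
      exact Real.logb_pos (by norm_num) this
    · exact Real.logb_pos (by norm_num) hL1
  -- the ball as a Finset
  set B : V → ℕ → Finset V := fun u m => Finset.univ.filter (fun w => G.dist u w ≤ m) with hB
  have hBself : ∀ u m, u ∈ B u m := by
    intro u m; simp [hB, SimpleGraph.dist_self]
  have hBcard : ∀ u m, (B u m).card ≤ n := fun u m => Finset.card_le_univ _
  -- key: L ^ E ≥ n
  have hLE : (n : ℝ) ≤ L ^ E := by
    have hnpos : (0:ℝ) < n := by positivity
    have hLpos : (0:ℝ) < L := by linarith
    have h1 : Real.log (n : ℝ) / Real.log L ≤ E := by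
      have h2 : Real.logb 2 (n:ℝ) / Real.logb 2 L ≤ E := by
        rw [hEdef]; exact Nat.le_ceil _
      have : Real.logb 2 (n:ℝ) / Real.logb 2 L = Real.log (n:ℝ) / Real.log L := by
        unfold Real.logb
        rw [div_div_div_cancel_right₀]
        exact Real.log_ne_zero_of_pos_of_ne_one (by norm_num) (by norm_num)
      linarith [this ▸ h2]
    have : Real.log (n : ℝ) ≤ E * Real.log L := by
      rw [div_le_iff₀ hlogL] at h1; linarith
    calc (n:ℝ) = Real.exp (Real.log (n:ℝ)) := (Real.exp_log hnpos).symm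
      _ ≤ Real.exp (E * Real.log L) := Real.exp_le_exp.mpr this
      _ = L ^ E := by
          rw [← Real.log_pow, Real.exp_log (by positivity)]
  -- existence of a good radius for each vertex
  have hex : ∀ u : V, ∃ j : ℕ, j < E ∧
      ((B u (4 * 4 ^ j * r)).card : ℝ) ≤ L * ((B u (4 ^ j * r)).card : ℝ) := by
    intro u
    by_contra hcon
    push_neg at hcon
    have hchain : ∀ j ≤ E, (L : ℝ) ^ j ≤ ((B u (4 ^ j * r)).card : ℝ) := by
      intro j hj
      induction j with
      | zero =>
        simp only [pow_zero]
        have : 1 ≤ (B u (4 ^ 0 * r)).card := Finset.card_pos.mpr ⟨u, hBself u _⟩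
        exact_mod_cast this
      | succ j ih =>
        have hjE : j < E := Nat.lt_of_succ_le hj
        have := hcon j hjE
        have h4 : (4 : ℕ) * 4 ^ j * r = 4 ^ (j + 1) * r := by ring
        have hstep := this
        rw [h4] at hstep
        have ihh := ih (le_of_lt hjE)
        calc (L : ℝ) ^ (j + 1) = L * L ^ j := by ring
          _ ≤ L * ((B u (4 ^ j * r)).card : ℝ) := by
              apply mul_le_mul_of_nonneg_left ihh (by linarith)
          _ ≤ ((B u (4 ^ (j+1) * r)).card : ℝ) := le_of_lt hstep
    have h1 := hchain E le_rfl
    have h2 : ((B u (4 ^ E * r)).card : ℝ) ≤ n := by exact_mod_cast hBcard u _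
    -- strictness at last step
    have hE' : E - 1 < E := Nat.sub_lt (by omega) one_pos
    have hstep := hcon (E - 1) hE'
    have h4 : (4 : ℕ) * 4 ^ (E-1) * r = 4 ^ (E - 1 + 1) * r := by ring
    rw [h4] at hstep
    have hEeq : E - 1 + 1 = E := by omega
    rw [hEeq] at hstep
    have h5 := hchain (E - 1) (by omega)
    have : (L : ℝ) ^ E ≤ L * L ^ (E - 1) := by
      rw [← pow_succ']
      rw [show E - 1 + 1 = E by omega]
    have hlt : (L:ℝ) ^ E < ((B u (4 ^ E * r)).card : ℝ) := by
      calc (L:ℝ) ^ E ≤ L * L ^ (E-1) := this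
        _ ≤ L * ((B u (4 ^ (E-1) * r)).card : ℝ) :=
            mul_le_mul_of_nonneg_left h5 (by linarith)
        _ < _ := hstep
    linarith [hLE]
  choose j hjlt hjcard using hex
  -- radii
  set ρ : V → ℕ := fun u => 2 * 4 ^ (j u) * r with hρ
  set hb : V → Finset V := fun u => B u (4 ^ (j u) * r) with hhb
  have hρr : ∀ u, r ≤ ρ u := by
    intro u; have : 1 ≤ 2 * 4 ^ (j u) := by
      have : 0 < 2 * 4 ^ (j u) := by positivity
      omega
    calc r = 1 * r := (one_mul r).symm
      _ ≤ 2 * 4 ^ (j u) * r := Nat.mul_le_mul_right r this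
  have hρub : ∀ u, ρ u ≤ 2 * r * 4 ^ E := by
    intro u
    have : (4:ℕ) ^ (j u) ≤ 4 ^ E := Nat.pow_le_pow_right (by norm_num) (le_of_lt (hjlt u))
    calc ρ u = 2 * 4 ^ (j u) * r := rfl
      _ ≤ 2 * 4 ^ E * r := by
          apply Nat.mul_le_mul_right
          exact Nat.mul_le_mul_left 2 this
      _ = 2 * r * 4 ^ E := by ring
  -- disjointness lemma: if c' not in B(c, ρ c) and ρ c' ≤ ρ c then half-balls disjoint
  have hdisj : ∀ c c' : V, ρ c < G.dist c c' → ρ c' ≤ ρ c → Disjoint (hb c) (hb c') := by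
    intro c c' hd hle
    rw [Finset.disjoint_left]
    intro x hx hx'
    simp only [hhb, hB, Finset.mem_filter] at hx hx'
    have htri : G.dist c c' ≤ G.dist c x + G.dist x c' := hconn.dist_triangle
    have hcomm : G.dist x c' = G.dist c' x := SimpleGraph.dist_comm
    have h2c : ρ c = 2 * (4 ^ (j c) * r) := by simp only [hρ]; ring
    have h2c' : ρ c' = 2 * (4 ^ (j c') * r) := by simp only [hρ]; ring
    rw [h2c] at hd hle
    rw [h2c'] at hle
    omega
  -- greedy construction
  have greedy : ∀ N (S : Finset V), S.card ≤ N → ∃ C : Finset V, C ⊆ S ∧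
      (∀ w ∈ S, ∃ c ∈ C, G.dist c w ≤ ρ c) ∧
      (∀ a ∈ C, ∀ b ∈ C, a ≠ b → Disjoint (hb a) (hb b)) := by
    intro N
    induction N with
    | zero =>
      intro S hS
      have : S = ∅ := Finset.card_eq_zero.mp (Nat.le_zero.mp hS)
      exact ⟨∅, by simp [this]⟩
    | succ N ih =>
      intro S hS
      rcases S.eq_empty_or_nonempty with hSe | hSne
      · exact ⟨∅, by simp [hSe]⟩
      obtain ⟨c, hcS, hcmax⟩ := S.exists_max_image ρ hSne
      set S' : Finset V := S.filter (fun w => ¬ G.dist c w ≤ ρ c) with hS'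
      have hS'sub : S' ⊆ S := Finset.filter_subset _ _
      have hcnot : c ∉ S' := by simp [hS', SimpleGraph.dist_self]
      have hS'lt : S'.card < S.card :=
        Finset.card_lt_card ⟨hS'sub, fun h => hcnot (h hcS)⟩
      obtain ⟨C', hC'sub, hC'cov, hC'disj⟩ := ih S' (by omega)
      refine ⟨insert c C', ?_, ?_, ?_⟩
      · intro x hx
        rcases Finset.mem_insert.mp hx with h | h
        · exact h ▸ hcS
        · exact hS'sub (hC'sub h)
      · intro w hw
        by_cases hcw : G.dist c w ≤ ρ c
        · exact ⟨c, Finset.mem_insert_self _ _, hcw⟩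
        · obtain ⟨c', hc', hd⟩ := hC'cov w (Finset.mem_filter.mpr ⟨hw, hcw⟩)
          exact ⟨c', Finset.mem_insert_of_mem hc', hd⟩
      · intro a ha b hb' hab
        have key : ∀ c' ∈ C', Disjoint (hb c) (hb c') := by
          intro c' hc'
          have hc'S' : c' ∈ S' := hC'sub hc'
          have hdcc' : ρ c < G.dist c c' := by
            have := Finset.mem_filter.mp hc'S'
            omega
          exact hdisj c c' hdcc' (hcmax c' (hS'sub hc'S'))
        rcases Finset.mem_insert.mp ha with ha' | ha' <;>
          rcases Finset.mem_insert.mp hb' with hb'' | hb''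
        · exact absurd (ha'.trans hb''.symm) hab
        · exact ha' ▸ key b hb''
        · exact (hb'' ▸ (key a ha')).symm
        · exact hC'disj a ha' b hb'' hab
  obtain ⟨C, _, hcov, hCdisj⟩ := greedy (Finset.univ.card) Finset.univ le_rfl
  -- build the indexed family
  refine ⟨C.card, fun i => (C.equivFin.symm i : V), fun i => ρ (C.equivFin.symm i : V),
      ?_, ?_, ?_⟩
  · intro i
    exact ⟨hρr _, hρub _⟩
  · intro w
    obtain ⟨c, hc, hd⟩ := hcov w (Finset.mem_univ w)
    refine ⟨C.equivFin ⟨c, hc⟩, ?_⟩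
    simp only [Equiv.symm_apply_apply]
    exact hd
  -- the sum bound
  · have hset : ∀ u : V, ({w : V | G.dist u w ≤ 2 * ρ u}).ncard
        = (B u (4 * 4 ^ (j u) * r)).card := by
      intro u
      have h2ρ : 2 * ρ u = 4 * 4 ^ (j u) * r := by
        simp only [hρ]; ring
      rw [h2ρ]
      have : {w : V | G.dist u w ≤ 4 * 4 ^ (j u) * r} = ↑(B u (4 * 4 ^ (j u) * r)) := by
        ext w; simp [hB]
      rw [this, Set.ncard_coe_finset]
    have hsum1 : ∑ i : Fin C.card, ({w : V | G.dist ((C.equivFin.symm i : V)) w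
        ≤ 2 * ρ (C.equivFin.symm i : V)}).ncard
        = ∑ c ∈ C, (B c (4 * 4 ^ (j c) * r)).card := by
      rw [← Finset.sum_coe_sort C (fun c => (B (c:V) (4 * 4 ^ (j (c:V)) * r)).card)]
      rw [← Equiv.sum_comp C.equivFin.symm]
      congr 1
      ext i
      rw [hset]
    rw [hsum1]
    push_cast
    have hsum2 : ∑ c ∈ C, ((B c (4 * 4 ^ (j c) * r)).card : ℝ)
        ≤ L * ∑ c ∈ C, ((hb c).card : ℝ) := by
      rw [Finset.mul_sum]
      exact Finset.sum_le_sum (fun c _ => hjcard c)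
    have hsum3 : ∑ c ∈ C, ((hb c).card : ℝ) ≤ n := by
      have : ∑ c ∈ C, (hb c).card = (C.biUnion hb).card :=
        (Finset.card_biUnion hCdisj).symm
      have h2 : (C.biUnion hb).card ≤ n := Finset.card_le_univ _
      have : ∑ c ∈ C, (hb c).card ≤ n := this ▸ h2
      exact_mod_cast this
    calc (∑ c ∈ C, ((B c (4 * 4 ^ (j c) * r)).card : ℝ))
        ≤ L * ∑ c ∈ C, ((hb c).card : ℝ) := hsum2
      _ ≤ L * n := by
          apply mul_le_mul_of_nonneg_left hsum3 (by linarith)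
      _ = (n : ℝ) * L := by ring
end

section
/- Assume Hypothesis DP(a,b,C₀) with 2b + a > 1. Then for every constant c > 0 there is a constant C (depending on a, b, C₀, c) such that the following holds. Let r ≥ 1 be an integer, E ≥ 1 a real, and let X be an undirected unweighted graph on N vertices with N ≥ r^{2b/(2b+a−1)}·E^{1/(2b+a−1)}. Let Q be a pair set on X with |Q| ≤ c·r^{2(1−a)/(2b+a−1)}·E^{2/(2b+a−1)}. Then (X,Q) admits a pairwise distance preserver on at most C·N·E edges. -/
/-!
Apply DP to `(X, Q)` directly. The term `N + N^a |Q|^b` is `O(N E)`: writing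
`N^a = N · N^(a-1)` and using `a ≤ 1`, the lower bound `N ≥ M := r^(2b/s) E^(1/s)` with
`s = 2b + a - 1` gives `N^a |Q|^b ≤ N · M^(a-1) |Q|^b`, and the upper bound on `|Q|` is chosen so
that `M^(a-1) |Q|^b ≤ c^b E`.
-/

/-- **Hypothesis DP(a, b, C₀):** every undirected unweighted graph on `N` vertices together
with any pair set `P` admits a pairwise distance preserver on at most
`C₀ · (N + N^a · |P|^b)` edges. -/
def DPHyp (a b C₀ : ℝ) : Prop :=
  ∀ (V : Type) [Fintype V] (G : SimpleGraph V) (P : Finset (V × V)),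
    ∃ H : SimpleGraph V, H ≤ G ∧
      (∀ p ∈ P, H.dist p.1 p.2 = G.dist p.1 p.2) ∧
      (H.edgeSet.ncard : ℝ) ≤
        C₀ * ((Fintype.card V : ℝ) + (Fintype.card V : ℝ) ^ a * (P.card : ℝ) ^ b)

open Real

/- With `s = 2b + a - 1`, the exponents of `r` cancel, `2b(a-1)/s + 2(1-a)b/s = 0`, and those of
`E` add up to `(a-1)/s + 2b/s = 1`. -/
lemma cluster_exponent_identity {a b c r E : ℝ} (hs : 2 * b + a - 1 ≠ 0) (hr : 0 < r)
    (hE : 0 < E) (hc : 0 ≤ c) :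
    (r ^ (2 * b / (2 * b + a - 1)) * E ^ (1 / (2 * b + a - 1))) ^ (a - 1) *
        (c * r ^ (2 * (1 - a) / (2 * b + a - 1)) * E ^ (2 / (2 * b + a - 1))) ^ b =
      c ^ b * E := by
  set s := 2 * b + a - 1
  have hr_exp : 2 * b / s * (a - 1) + 2 * (1 - a) / s * b = 0 := by
    field_simp; ring
  have hE_exp : 1 / s * (a - 1) + 2 / s * b = 1 := by
    field_simp; ring
  rw [mul_rpow (by positivity) (by positivity), mul_rpow (by positivity) (by positivity),
    mul_rpow hc (by positivity), ← rpow_mul hr.le, ← rpow_mul hE.le, ← rpow_mul hr.le,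
    ← rpow_mul hE.le]
  calc r ^ (2 * b / s * (a - 1)) * E ^ (1 / s * (a - 1)) *
        (c ^ b * r ^ (2 * (1 - a) / s * b) * E ^ (2 / s * b))
      = c ^ b * (r ^ (2 * b / s * (a - 1)) * r ^ (2 * (1 - a) / s * b)) *
          (E ^ (1 / s * (a - 1)) * E ^ (2 / s * b)) := by ring
    _ = c ^ b * E := by
      rw [← rpow_add hr, ← rpow_add hE, hr_exp, hE_exp, rpow_zero, rpow_one, mul_one]

lemma rpow_mul_rpow_le_mul_rpow_mul_rpow {a b M N q B : ℝ} (ha : a ≤ 1) (hb : 0 ≤ b)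
    (hM : 0 < M) (hMN : M ≤ N) (hq : 0 ≤ q) (hqB : q ≤ B) :
    N ^ a * q ^ b ≤ N * (M ^ (a - 1) * B ^ b) := by
  have hN : 0 < N := hM.trans_le hMN
  have hNa : N ^ a = N * N ^ (a - 1) := by
    rw [rpow_sub_one hN.ne']; field_simp
  rw [hNa, mul_assoc]
  refine mul_le_mul_of_nonneg_left (mul_le_mul ?_ ?_ (by positivity) (by positivity)) hN.le
  · exact rpow_le_rpow_of_nonpos hM hMN (by linarith)
  · exact rpow_le_rpow hq hqB hb

lemma rpow_mul_rpow_le_of_large_cluster {a b c r E N q : ℝ} (ha : a ≤ 1) (hb : 0 ≤ b)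
    (hs : 2 * b + a - 1 ≠ 0) (hc : 0 ≤ c) (hr : 0 < r) (hE : 0 < E)
    (hN : r ^ (2 * b / (2 * b + a - 1)) * E ^ (1 / (2 * b + a - 1)) ≤ N) (hq : 0 ≤ q)
    (hqB : q ≤ c * r ^ (2 * (1 - a) / (2 * b + a - 1)) * E ^ (2 / (2 * b + a - 1))) :
    N ^ a * q ^ b ≤ c ^ b * (N * E) := by
  calc N ^ a * q ^ b
      ≤ N * ((r ^ (2 * b / (2 * b + a - 1)) * E ^ (1 / (2 * b + a - 1))) ^ (a - 1) *
          (c * r ^ (2 * (1 - a) / (2 * b + a - 1)) * E ^ (2 / (2 * b + a - 1))) ^ b) :=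
        rpow_mul_rpow_le_mul_rpow_mul_rpow ha hb (by positivity) hN hq hqB
    _ = c ^ b * (N * E) := by
        rw [cluster_exponent_identity hs hr hE hc]; ring

theorem large_cluster_preserver_general (a b C₀ : ℝ) (ha1 : a < 1)
    (hb0 : 0 < b) (hab : 1 < 2 * b + a) (hDP : DPHyp a b C₀)
    (c : ℝ) (hc : 0 < c) :
    ∃ C : ℝ, 0 < C ∧
      ∀ (V : Type) [Fintype V] (X : SimpleGraph V) (r : ℕ), 1 ≤ r →
        ∀ E : ℝ, 1 ≤ E →
        ((r : ℝ) ^ (2 * b / (2 * b + a - 1)) * E ^ (1 / (2 * b + a - 1)) ≤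
          (Fintype.card V : ℝ)) →
        ∀ Q : Finset (V × V),
          ((Q.card : ℝ) ≤
            c * (r : ℝ) ^ (2 * (1 - a) / (2 * b + a - 1)) * E ^ (2 / (2 * b + a - 1))) →
          ∃ H : SimpleGraph V, H ≤ X ∧
            (∀ q ∈ Q, H.dist q.1 q.2 = X.dist q.1 q.2) ∧
            (H.edgeSet.ncard : ℝ) ≤ C * (Fintype.card V : ℝ) * E := by
  refine ⟨(|C₀| + 1) * (1 + c ^ b), by positivity, ?_⟩
  intro V _ X r hr E hE hN Q hQ
  obtain ⟨H, hHX, hdist, hcard⟩ := hDP V X Q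
  refine ⟨H, hHX, hdist, ?_⟩
  set N : ℝ := (Fintype.card V : ℝ)
  have hpairs : N ^ a * (Q.card : ℝ) ^ b ≤ c ^ b * (N * E) :=
    rpow_mul_rpow_le_of_large_cluster ha1.le hb0.le (by linarith) hc.le (Nat.cast_pos.mpr hr)
      (by linarith) hN (by positivity) hQ
  have hNE : N ≤ N * E := le_mul_of_one_le_right (by positivity) hE
  calc (H.edgeSet.ncard : ℝ) ≤ C₀ * (N + N ^ a * (Q.card : ℝ) ^ b) := hcard
    _ ≤ (|C₀| + 1) * (N + N ^ a * (Q.card : ℝ) ^ b) := by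
        gcongr
        linarith [le_abs_self C₀]
    _ ≤ (|C₀| + 1) * (N * E + c ^ b * (N * E)) := by gcongr
    _ = (|C₀| + 1) * (1 + c ^ b) * N * E := by ring

/-- **Cheap preservers in large clusters.** Assume `DP(a,b,C₀)` with `2b + a > 1`. For every
constant `c > 0` there is a constant `C` such that: for every integer `r ≥ 1`, real `E ≥ 1`,
graph `X` on `N ≥ r^(2b/(2b+a-1)) · E^(1/(2b+a-1))` vertices, and pair set `Q` with
`|Q| ≤ c · r^(2(1-a)/(2b+a-1)) · E^(2/(2b+a-1))`, the pair `(X, Q)` admits a pairwise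
distance preserver on at most `C · N · E` edges. -/
theorem large_cluster_preserver (a b C₀ : ℝ) (ha0 : 0 ≤ a) (ha1 : a < 1)
    (hb0 : 0 < b) (hb1 : b ≤ 1) (hab : 1 < 2 * b + a) (hDP : DPHyp a b C₀)
    (c : ℝ) (hc : 0 < c) :
    ∃ C : ℝ, 0 < C ∧
      ∀ (V : Type) [Fintype V] (X : SimpleGraph V) (r : ℕ), 1 ≤ r →
        ∀ E : ℝ, 1 ≤ E →
        ((r : ℝ) ^ (2 * b / (2 * b + a - 1)) * E ^ (1 / (2 * b + a - 1)) ≤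
          (Fintype.card V : ℝ)) →
        ∀ Q : Finset (V × V),
          ((Q.card : ℝ) ≤
            c * (r : ℝ) ^ (2 * (1 - a) / (2 * b + a - 1)) * E ^ (2 / (2 * b + a - 1))) →
          ∃ H : SimpleGraph V, H ≤ X ∧
            (∀ q ∈ Q, H.dist q.1 q.2 = X.dist q.1 q.2) ∧
            (H.edgeSet.ncard : ℝ) ≤ C * (Fintype.card V : ℝ) * E :=
  large_cluster_preserver_general a b C₀ ha1 hb0 hab hDP c hc
end

section
/- For every real β with 0 < β < 1 there is a constant c > 0 such that the following holds. Let α > 0 and let (S_k)_{k≥1} be a sequence of positive reals with S_1 ≥ 1 and S_{k+1} ≥ S_k + α·S_k^{β} for every k ≥ 1. Then for every k ≥ 1, S_{k+1} ≥ c·min(α, α^{1/(1−β)})·k^{1/(1−β)}. -/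
/-!
Put `p = 1 - β` and `T_k = S_k ^ p`. Writing the recurrence as `S_{k+1} ≥ S_k (1 + x)` with
`x = α S_k ^ (-p)`, the elementary bound `(1 + x) ^ p ≥ 1 + c_p min(x, x ^ p)` together with
`S_k ≥ 1` linearises it to `T_{k+1} ≥ T_k + c_p min(α, α ^ p)`. Summing gives
`T_{k+1} ≥ c_p min(α, α ^ p) k`, and taking `p`-th roots yields the claim with `c = c_p ^ (1 / p)`.
-/

open Real

lemma Real.min_rpow {a b z : ℝ} (ha : 0 ≤ a) (hb : 0 ≤ b) (hz : 0 ≤ z) :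
    min a b ^ z = min (a ^ z) (b ^ z) := by
  rcases le_total a b with h | h
  · rw [min_eq_left h, min_eq_left (rpow_le_rpow ha h hz)]
  · rw [min_eq_right h, min_eq_right (rpow_le_rpow hb h hz)]

lemma one_add_mul_le_one_add_rpow_of_le_one {p x : ℝ} (hp0 : 0 ≤ p) (hp1 : p ≤ 1)
    (hx0 : 0 ≤ x) (hx1 : x ≤ 1) : 1 + (2 ^ p - 1) * x ≤ (1 + x) ^ p := by
  have chord := (concaveOn_rpow hp0 hp1).2 (Set.mem_Ici.2 zero_le_one)
    (Set.mem_Ici.2 zero_le_two) (sub_nonneg.2 hx1) hx0 (sub_add_cancel 1 x)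
  simp only [smul_eq_mul, one_rpow] at chord
  rw [show (1 - x) * 1 + x * 2 = 1 + x by ring] at chord
  linarith

lemma one_add_mul_rpow_le_one_add_rpow {p x : ℝ} (hp : 0 ≤ p) (hx : 1 ≤ x) :
    1 + (1 - 2 ^ (-p)) * x ^ p ≤ (1 + x) ^ p := by
  have h2 : (2 : ℝ) ^ p ≤ (1 + x) ^ p := rpow_le_rpow zero_le_two (by linarith) hp
  have hx : x ^ p ≤ (1 + x) ^ p := rpow_le_rpow (by linarith) (by linarith) hp
  have h2inv : (2 : ℝ) ^ (-p) * 2 ^ p = 1 := by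
    rw [← rpow_add zero_lt_two, neg_add_cancel, rpow_zero]
  have h2le : (2 : ℝ) ^ (-p) ≤ 1 := rpow_le_one_of_one_le_of_nonpos one_le_two (by linarith)
  -- average `h2` and `hx` with weights `2 ^ (-p)` and `1 - 2 ^ (-p)`
  nlinarith [rpow_nonneg zero_le_two (-p)]

noncomputable def growthConst (p : ℝ) : ℝ := min (2 ^ p - 1) (1 - 2 ^ (-p))

lemma growthConst_pos {p : ℝ} (hp : 0 < p) : 0 < growthConst p :=
  lt_min (sub_pos.2 (one_lt_rpow one_lt_two hp))
    (sub_pos.2 (rpow_lt_one_of_one_lt_of_neg one_lt_two (neg_neg_of_pos hp)))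

lemma one_add_growthConst_mul_le_one_add_rpow {p x : ℝ} (hp0 : 0 ≤ p) (hp1 : p ≤ 1)
    (hx : 0 ≤ x) : 1 + growthConst p * min x (x ^ p) ≤ (1 + x) ^ p := by
  rcases le_total x 1 with hx1 | hx1
  · calc 1 + growthConst p * min x (x ^ p) ≤ 1 + (2 ^ p - 1) * x := by
          gcongr
          · exact sub_nonneg.2 (one_le_rpow one_le_two hp0)
          · exact min_le_left _ _
          · exact min_le_left _ _
      _ ≤ (1 + x) ^ p := one_add_mul_le_one_add_rpow_of_le_one hp0 hp1 hx hx1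
  · calc 1 + growthConst p * min x (x ^ p) ≤ 1 + (1 - 2 ^ (-p)) * x ^ p := by
          gcongr
          · exact sub_nonneg.2 (rpow_le_one_of_one_le_of_nonpos one_le_two (neg_nonpos.2 hp0))
          · exact min_le_right _ _
          · exact min_le_right _ _
      _ ≤ (1 + x) ^ p := one_add_mul_rpow_le_one_add_rpow hp0 hx1

lemma rpow_add_growthConst_mul_le {p α a b : ℝ} (hp0 : 0 < p) (hp1 : p ≤ 1) (hα : 0 ≤ α)
    (ha : 1 ≤ a) (hab : a + α * a ^ (1 - p) ≤ b) :
    a ^ p + growthConst p * min α (α ^ p) ≤ b ^ p := by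
  have ha0 : 0 < a := zero_lt_one.trans_le ha
  set x := α * a ^ (-p) with hx_def
  have hx : 0 ≤ x := by positivity
  have hapx : a ^ p * x = α := by
    rw [hx_def, mul_left_comm, ← rpow_add ha0, add_neg_cancel, rpow_zero, mul_one]
  have hax : a * (1 + x) = a + α * a ^ (1 - p) := by
    rw [hx_def, sub_eq_add_neg, rpow_add ha0, rpow_one]; ring
  have hαp : α ^ p ≤ a ^ p * x ^ p := by
    rw [← mul_rpow ha0.le hx]
    refine rpow_le_rpow hα ?_ hp0.le
    rw [← hapx]
    exact mul_le_mul_of_nonneg_right (rpow_le_self_of_one_le ha hp1) hx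
  have hmin : min α (α ^ p) ≤ a ^ p * min x (x ^ p) := by
    rw [mul_min_of_nonneg _ _ (rpow_nonneg ha0.le p), hapx]
    exact min_le_min le_rfl hαp
  calc a ^ p + growthConst p * min α (α ^ p)
      ≤ a ^ p + growthConst p * (a ^ p * min x (x ^ p)) := by
        have := (growthConst_pos hp0).le
        gcongr
    _ = a ^ p * (1 + growthConst p * min x (x ^ p)) := by ring
    _ ≤ a ^ p * (1 + x) ^ p := by
        gcongr
        exact one_add_growthConst_mul_le_one_add_rpow hp0.le hp1 hx
    _ = (a * (1 + x)) ^ p := (mul_rpow ha0.le (by linarith)).symm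
    _ ≤ b ^ p := rpow_le_rpow (by positivity) (hax ▸ hab) hp0.le

lemma add_mul_le_of_add_le_succ {u : ℕ → ℝ} {d : ℝ} (h : ∀ k, 1 ≤ k → u k + d ≤ u (k + 1))
    (k : ℕ) : u 1 + d * k ≤ u (k + 1) := by
  induction k with
  | zero => simp
  | succ k ih => push_cast; linarith [h (k + 1) (by omega)]

/-- **Discrete growth lemma.** For every real `β` with `0 < β < 1` there is a constant
`c > 0` such that: for every `α > 0` and every sequence `(S_k)_{k ≥ 1}` of positive reals
with `S_1 ≥ 1` and `S_{k+1} ≥ S_k + α · S_k^β` for all `k ≥ 1`, one has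
`S_{k+1} ≥ c · min(α, α^(1/(1-β))) · k^(1/(1-β))` for every `k ≥ 1`. -/
theorem discrete_growth_lemma (β : ℝ) (hβ0 : 0 < β) (hβ1 : β < 1) :
    ∃ c : ℝ, 0 < c ∧
      ∀ α : ℝ, 0 < α →
      ∀ S : ℕ → ℝ,
        (∀ k : ℕ, 1 ≤ k → 0 < S k) →
        1 ≤ S 1 →
        (∀ k : ℕ, 1 ≤ k → S k + α * S k ^ β ≤ S (k + 1)) →
        ∀ k : ℕ, 1 ≤ k →
          c * min α (α ^ (1 / (1 - β))) * (k : ℝ) ^ (1 / (1 - β)) ≤ S (k + 1) := by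
  obtain ⟨p, rfl⟩ : ∃ p, β = 1 - p := ⟨1 - β, (sub_sub_cancel 1 β).symm⟩
  rw [sub_sub_cancel]
  have hp0 : 0 < p := by linarith
  have hp1 : p ≤ 1 := by linarith
  set c := growthConst p
  have hc : 0 < c := growthConst_pos hp0
  refine ⟨c ^ (1 / p), rpow_pos_of_pos hc _,
    fun α hα S hS_pos hS1 hS k hk => ?_⟩
  have hS_mono : MonotoneOn S (Set.Ici 1) := monotoneOn_nat_Ici_of_le_succ fun n hn =>
    le_of_add_le_of_nonneg_left (hS n hn) (by have := hS_pos n hn; positivity)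
  have hS_one (n : ℕ) (hn : 1 ≤ n) : 1 ≤ S n := hS1.trans (hS_mono Set.self_mem_Ici hn hn)
  have hT (n : ℕ) (hn : 1 ≤ n) : S n ^ p + c * min α (α ^ p) ≤ S (n + 1) ^ p :=
    rpow_add_growthConst_mul_le hp0 hp1 hα.le (hS_one n hn) (hS n hn)
  have hTk : c * min α (α ^ p) * k ≤ S (k + 1) ^ p := by
    linarith [add_mul_le_of_add_le_succ hT k, rpow_nonneg (zero_le_one.trans hS1) p]
  have hα_pow : (α ^ p) ^ (1 / p) = α := by
    rw [← rpow_mul hα.le, mul_one_div_cancel hp0.ne', rpow_one]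
  calc c ^ (1 / p) * min α (α ^ (1 / p)) * (k : ℝ) ^ (1 / p)
      = (c * min α (α ^ p) * k) ^ (1 / p) := by
        rw [mul_rpow, mul_rpow, min_rpow, hα_pow, min_comm] <;> positivity
    _ ≤ (S (k + 1) ^ p) ^ (1 / p) := rpow_le_rpow (by positivity) hTk (by positivity)
    _ = S (k + 1) := by
        rw [← rpow_mul (hS_pos _ (by omega)).le, mul_one_div_cancel hp0.ne', rpow_one]
end
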